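/- Let 𝓑 be a finite family of axis-parallel boxes in ℝ^d with ν(𝓑) = n ≥ 2, and for x ∈ ℝ let 𝓑⁻(x) be the boxes lying strictly left of the hyperplane x₁ = x and 𝓑⁺(x) those strictly right. Then for any 0 ≤ k ≤ n−2 there exists a ∈ ℝ such that ν(𝓑⁻(a)) ≤ k and ν(𝓑⁺(a)) ≤ n − k − 1. -/

import Mathlib

/-- A finite point set `S` pierces the family `F` if every member contains a point of `S`. -/
def Piercing {α : Type*} (S : Finset α) (F : Finset (Set α)) : Prop :=
  ∀ B ∈ F, ∃ p ∈ S, p ∈ B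

/-- The piercing (transversal) number τ of a finite family of sets. -/
noncomputable def tau {α : Type*} (F : Finset (Set α)) : ℕ :=
  sInf {n | ∃ S : Finset α, S.card = n ∧ Piercing S F}

/-- The independence number ν : the maximal number of pairwise disjoint members. -/
noncomputable def nu {α : Type*} (F : Finset (Set α)) : ℕ :=
  sSup {n | ∃ G ⊆ F, G.card = n ∧ (G : Set (Set α)).PairwiseDisjoint id}

/-- An axis-parallel box in ℝ^d : a product of d nonempty closed intervals. -/
def IsBox (d : ℕ) (B : Set (Fin d → ℝ)) : Prop :=
  ∃ l u : Fin d → ℝ, l ≤ u ∧ B = Set.Icc l u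

/-- `f n d` : the supremum of τ over finite families of boxes in ℝ^d with ν ≤ n. -/
noncomputable def fBox (n d : ℕ) : ℕ :=
  sSup {t | ∃ F : Finset (Set (Fin d → ℝ)),
    (∀ B ∈ F, IsBox d B) ∧ nu F ≤ n ∧ tau F = t}

/-!
Sort the boxes by the right end `r B` of their projection to the first axis and let `a` be
the smallest value of `r` at which the boxes with `r B ≤ a` already contain `k + 1` pairwise
disjoint ones. The boxes with `r B < a` then have `ν ≤ k`, while every box lying strictly right
of `a` is disjoint from each box with `r B ≤ a`, so adding a disjoint family of the former to
those `k + 1` boxes shows `ν(𝓑⁺(a)) + k + 1 ≤ ν(𝓑)`.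
-/

section Nu

variable {α : Type*}

lemma nu_bddAbove (F : Finset (Set α)) :
    BddAbove {n | ∃ G ⊆ F, G.card = n ∧ (G : Set (Set α)).PairwiseDisjoint id} :=
  ⟨F.card, fun _ ⟨_, hG, hcard, _⟩ => hcard ▸ Finset.card_le_card hG⟩

lemma card_le_nu {F G : Finset (Set α)} (hG : G ⊆ F)
    (hdisj : (G : Set (Set α)).PairwiseDisjoint id) : G.card ≤ nu F :=
  le_csSup (nu_bddAbove F) ⟨G, hG, rfl, hdisj⟩

lemma exists_subset_card_eq_nu (F : Finset (Set α)) :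
    ∃ G ⊆ F, G.card = nu F ∧ (G : Set (Set α)).PairwiseDisjoint id := by
  apply Nat.sSup_mem _ (nu_bddAbove F)
  exact ⟨0, ∅, Finset.empty_subset F, rfl, by simp⟩

lemma nu_mono : Monotone (nu : Finset (Set α) → ℕ) := fun F₁ _ h => by
  obtain ⟨G, hG, hcard, hdisj⟩ := exists_subset_card_eq_nu F₁
  exact hcard ▸ card_le_nu (hG.trans h) hdisj

@[simp]
lemma nu_empty : nu (∅ : Finset (Set α)) = 0 := by
  obtain ⟨G, hG, hcard, -⟩ := exists_subset_card_eq_nu (∅ : Finset (Set α))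
  rw [← hcard, Finset.subset_empty.1 hG, Finset.card_empty]

lemma nu_add_nu_le_nu_union [DecidableEq (Set α)] {F₁ F₂ : Finset (Set α)}
    (h : Disjoint F₁ F₂) (hsep : ∀ B₁ ∈ F₁, ∀ B₂ ∈ F₂, Disjoint B₁ B₂) :
    nu F₁ + nu F₂ ≤ nu (F₁ ∪ F₂) := by
  obtain ⟨G₁, hG₁, hcard₁, hdisj₁⟩ := exists_subset_card_eq_nu F₁
  obtain ⟨G₂, hG₂, hcard₂, hdisj₂⟩ := exists_subset_card_eq_nu F₂
  have hdisj : ((G₁ ∪ G₂ : Finset (Set α)) : Set (Set α)).PairwiseDisjoint id := by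
    rw [Finset.coe_union, Set.pairwiseDisjoint_union]
    exact ⟨hdisj₁, hdisj₂, fun B₁ hB₁ B₂ hB₂ _ => hsep B₁ (hG₁ hB₁) B₂ (hG₂ hB₂)⟩
  calc nu F₁ + nu F₂ = (G₁ ∪ G₂).card := by
        rw [Finset.card_union_of_disjoint (h.mono hG₁ hG₂), hcard₁, hcard₂]
    _ ≤ nu (F₁ ∪ F₂) := card_le_nu (Finset.union_subset_union hG₁ hG₂) hdisj

end Nu

lemma Monotone.exists_filter_lt_le_and_lt_filter_le {γ β : Type*} [LinearOrder β]
    {φ : Finset γ → ℕ} (hφ : Monotone φ) {k : ℕ} (h₀ : φ ∅ ≤ k) {s : Finset γ}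
    (hs : k < φ s) (r : γ → β) :
    ∃ a, φ {x ∈ s | r x < a} ≤ k ∧ k < φ {x ∈ s | r x ≤ a} := by
  set T := {a ∈ s.image r | k < φ {x ∈ s | r x ≤ a}}
  have hs_ne : s.Nonempty := Finset.nonempty_iff_ne_empty.2 fun h => by subst h; omega
  have hT : T.Nonempty := by
    obtain ⟨y, hy, hmax⟩ := s.exists_max_image r hs_ne
    refine ⟨r y, Finset.mem_filter.2 ⟨Finset.mem_image_of_mem r hy, ?_⟩⟩
    rwa [Finset.filter_true_of_mem hmax]
  refine ⟨T.min' hT, ?_, (Finset.mem_filter.1 (T.min'_mem hT)).2⟩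
  rcases Finset.eq_empty_or_nonempty {x ∈ s | r x < T.min' hT} with hempty | hne
  · rwa [hempty]
  obtain ⟨y, hy, hmax⟩ := Finset.exists_max_image _ r hne
  obtain ⟨hys, hylt⟩ := Finset.mem_filter.1 hy
  have hyT : r y ∉ T := fun hyT => (T.min'_le _ hyT).not_gt hylt
  calc φ {x ∈ s | r x < T.min' hT} ≤ φ {x ∈ s | r x ≤ r y} :=
        hφ fun x hx => Finset.mem_filter.2 ⟨(Finset.mem_filter.1 hx).1, hmax x hx⟩
    _ ≤ k := by simpa [T, Finset.mem_image_of_mem r hys] using hyT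

open scoped Classical in
theorem exists_sweep_cut_of_isGreatest {α β : Type*} [LinearOrder β] (f : α → β)
    {F : Finset (Set α)} (hF : ∀ B ∈ F, ∃ m, IsGreatest (f '' B) m) {k : ℕ}
    (hk : k < nu F) :
    ∃ a : β, nu (F.filter fun B => ∀ p ∈ B, f p < a) ≤ k ∧
      nu (F.filter fun B => ∀ p ∈ B, a < f p) + (k + 1) ≤ nu F := by
  obtain ⟨B₀, hB₀⟩ : F.Nonempty :=
    Finset.nonempty_iff_ne_empty.2 (by rintro rfl; simp at hk)
  have : Nonempty β := ⟨(hF B₀ hB₀).choose⟩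
  choose! r hr using hF
  have hmem : ∀ B ∈ F, ∃ p ∈ B, f p = r B := fun B hB => (hr B hB).1
  have hle : ∀ B ∈ F, ∀ p ∈ B, f p ≤ r B := fun B hB p hp => (hr B hB).2 ⟨p, hp, rfl⟩
  obtain ⟨a, hleft, hk_lt⟩ := nu_mono.exists_filter_lt_le_and_lt_filter_le (by simp) hk r
  have hleft_eq : (F.filter fun B => ∀ p ∈ B, f p < a) = {B ∈ F | r B < a} :=
    Finset.filter_congr fun B hB =>
      ⟨fun h => by obtain ⟨p, hp, hpr⟩ := hmem B hB; exact hpr ▸ h p hp,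
        fun h p hp => (hle B hB p hp).trans_lt h⟩
  set right := F.filter fun B => ∀ p ∈ B, a < f p
  have hsep : ∀ B₁ ∈ {B ∈ F | r B ≤ a}, ∀ B₂ ∈ right, Disjoint B₁ B₂ := by
    intro B₁ hB₁ B₂ hB₂
    rw [Finset.mem_filter] at hB₁ hB₂
    exact Set.disjoint_left.2 fun p hp₁ hp₂ =>
      ((hle B₁ hB₁.1 p hp₁).trans hB₁.2).not_gt (hB₂.2 p hp₂)
  have hdisj : Disjoint {B ∈ F | r B ≤ a} right :=
    Finset.disjoint_left.2 fun B hB₁ hB₂ => by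
      obtain ⟨p, hp, -⟩ := hmem B (Finset.mem_filter.1 hB₁).1
      exact Set.disjoint_left.1 (hsep B hB₁ B hB₂) hp hp
  refine ⟨a, hleft_eq ▸ hleft, ?_⟩
  calc nu right + (k + 1) ≤ nu {B ∈ F | r B ≤ a} + nu right := by omega
    _ ≤ nu ({B ∈ F | r B ≤ a} ∪ right) := nu_add_nu_le_nu_union hdisj hsep
    _ ≤ nu F :=
      nu_mono (Finset.union_subset (Finset.filter_subset _ _) (Finset.filter_subset _ _))

lemma IsBox.exists_isGreatest_image_eval {d : ℕ} {B : Set (Fin d → ℝ)} (hB : IsBox d B)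
    (i : Fin d) : ∃ m, IsGreatest ((fun p => p i) '' B) m := by
  obtain ⟨l, u, hlu, rfl⟩ := hB
  exact ⟨u i, ⟨u, ⟨hlu, le_rfl⟩, rfl⟩, by rintro _ ⟨p, hp, rfl⟩; exact hp.2 i⟩

open scoped Classical in
/-- The sweeping argument: if ν(𝓑) = n ≥ 2 and 0 ≤ k ≤ n-2, there is a cut
a ∈ ℝ such that the boxes strictly left of the hyperplane x₀ = a have ν ≤ k
and those strictly right have ν ≤ n - k - 1. -/
theorem exists_sweep_cut (d : ℕ) (F : Finset (Set (Fin (d + 1) → ℝ)))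
    (hF : ∀ B ∈ F, IsBox (d + 1) B) (n : ℕ) (hn : nu F = n) (hn2 : 2 ≤ n)
    (k : ℕ) (hk : k ≤ n - 2) :
    ∃ a : ℝ,
      nu (F.filter (fun B => ∀ p ∈ B, p 0 < a)) ≤ k ∧
      nu (F.filter (fun B => ∀ p ∈ B, a < p 0)) ≤ n - k - 1 := by
  obtain ⟨a, hleft, hright⟩ := exists_sweep_cut_of_isGreatest (fun p => p 0)
    (fun B hB => (hF B hB).exists_isGreatest_image_eval 0) (show k < nu F by omega)
  exact ⟨a, hleft, by omega⟩
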